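/- Let S be a compact invariant set for the multiflow Φ of a differential inclusion. If U ⊂ S satisfies ω_S(U) ⊂ U, then the maximal invariant subset of U equals ω_S(U): Inv(U) = ω_S(U). -/

import Mathlib

open Set MeasureTheory Filter Topology

namespace DIncl

variable {E : Type*} [NormedAddCommGroup E] [NormedSpace ℝ E] [CompleteSpace E]

/-- Upper semicontinuity of a set-valued map on a set `D`. -/
def USCOn {α β : Type*} [PseudoMetricSpace α] [PseudoMetricSpace β]
    (F : α → Set β) (D : Set α) : Prop :=
  ∀ x ∈ D, ∀ ε > 0, ∃ δ > 0, ∀ y ∈ D, dist y x < δ →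
    F y ⊆ {z | ∃ w ∈ F x, dist z w < ε}

/-- The Filippov conditions on `D`: upper semicontinuous with compact, convex,
nonempty values. -/
def FilippovOn {α : Type*} [PseudoMetricSpace α] (F : α → Set E) (D : Set α) : Prop :=
  USCOn F D ∧ ∀ x ∈ D, IsCompact (F x) ∧ Convex ℝ (F x) ∧ (F x).Nonempty

/-- `x` is a solution of the differential inclusion `ẋ ∈ F x` on the set `I`,
staying in `X`: an absolutely continuous function whose a.e. derivative lies in
`F (x t)`, encoded via the integral representation `x b = x a + ∫_a^b v`. -/
def IsSolOn (F : E → Set E) (X : Set E) (x : ℝ → E) (I : Set ℝ) : Prop :=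
  (∀ t ∈ I, x t ∈ X) ∧
  ∃ v : ℝ → E,
    (∀ a ∈ I, ∀ b ∈ I, IntervalIntegrable v volume a b) ∧
    (∀ᵐ t ∂volume, t ∈ I → v t ∈ F (x t)) ∧
    (∀ a ∈ I, ∀ b ∈ I, x b = x a + ∫ t in a..b, v t)

/-- The solution multiflow `Φ(T,a)` of `ẋ ∈ F x` in `X`. -/
def mflow (F : E → Set E) (X : Set E) (T : ℝ) (a : E) : Set E :=
  {b | ∃ x : ℝ → E, IsSolOn F X x (Icc 0 T) ∧ x 0 = a ∧ x T = b}

/-- `Φ(I,U)`. -/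
def mflowSet (F : E → Set E) (X : Set E) (I : Set ℝ) (U : Set E) : Set E :=
  ⋃ t ∈ I, ⋃ a ∈ U, mflow F X t a

/-- Maximal invariant subset of `U`: points admitting a full-time orbit in `U`. -/
def maxInv (F : E → Set E) (U : Set E) : Set E :=
  {x | ∃ ψ : ℝ → E, IsSolOn F U ψ univ ∧ ψ 0 = x}

/-- `S` is invariant: every point of `S` has a full-time orbit staying in `S`. -/
def IsInvSet (F : E → Set E) (S : Set E) : Prop := S ⊆ maxInv F S

/-- The restricted omega-limit set `ω_S(U)` (with `Φ^S = mflow F S`). -/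
def omegaS (F : E → Set E) (S U : Set E) : Set E :=
  ⋂ t ∈ Ici (0:ℝ), closure (mflowSet F S (Ici t) U)

/-- `(Φ^S)^*(I,U)` for the dual (backward-time) multiflow. -/
def mflowDualSet (F : E → Set E) (S : Set E) (I : Set ℝ) (U : Set E) : Set E :=
  ⋃ t ∈ I, ⋃ a ∈ U, {b | a ∈ mflow F S (-t) b}

/-- The restricted alpha-limit set `α_S(U)`. -/
def alphaS (F : E → Set E) (S U : Set E) : Set E :=
  ⋂ t ∈ Iio (0:ℝ), closure (mflowDualSet F S (Iic t) U)

/-- The interior of `U` relative to `X`. -/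
def relInt (X U : Set E) : Set E := {x ∈ X | U ∈ nhdsWithin x X}

/-- The closure of `U` relative to `X`. -/
def relCl (X U : Set E) : Set E := closure U ∩ X

/-- `A` is an attractor in `S`: the `ω_S`-limit set of a neighborhood of itself in `S`. -/
def IsAttractorIn (F : E → Set E) (S A : Set E) : Prop :=
  A ⊆ S ∧ ∃ U, A ⊆ relInt S U ∧ U ⊆ S ∧ omegaS F S U = A

/-- `R` is a repeller in `S`: the `α_S`-limit set of a neighborhood of itself in `S`. -/
def IsRepellerIn (F : E → Set E) (S R : Set E) : Prop :=
  R ⊆ S ∧ ∃ U, R ⊆ relInt S U ∧ U ⊆ S ∧ alphaS F S U = R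

/-- The dual repeller of an attractor `A` in `S`. -/
def dualRep (F : E → Set E) (S A : Set E) : Set E :=
  {x ∈ S | ¬ omegaS F S {x} ⊆ A}

/-- The dual attractor of a repeller `R` in `S`. -/
def dualAtt (F : E → Set E) (S R : Set E) : Set E :=
  {x ∈ S | ¬ alphaS F S {x} ⊆ R}

end DIncl

open DIncl Set MeasureTheory Filter Topology

/-!
Every orbit in `U` passes at each time `t ≥ 0` through a point reached from `U` in time `t`, so
`Inv(U) ⊆ ω_S(U)`. Conversely, a point `y ∈ ω_S(U)` is a limit of endpoints `x_k(T_k)` of solutions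
in `S` starting in `U` with `T_k → ∞`. Continuing them forward inside the invariant set `S` and
recentring at `T_k` gives `M`-Lipschitz paths in the compact set `S`, where `M` bounds `F` on `S`;
by Tychonoff they have a cluster point `φ` in the product topology. A difference quotient of a
solution is an average of velocities, so by upper semicontinuity and convexity of the values the
derivative of `φ` lies in `F`: `φ` is an orbit through `y`, and each `φ t` lies in `ω_S(U) ⊆ U`.
-/

section LipschitzFTC

variable {E : Type*} [NormedAddCommGroup E] [NormedSpace ℝ E] [FiniteDimensional ℝ E]
  {K : NNReal} {f : ℝ → E}

theorem LipschitzWith.intervalIntegrable_deriv (hf : LipschitzWith K f) (a b : ℝ) :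
    IntervalIntegrable (deriv f) volume a b :=
  (intervalIntegrable_const (c := (K : ℝ))).mono_fun
    (stronglyMeasurable_deriv f).aestronglyMeasurable.restrict
    (ae_of_all _ fun _ => (norm_deriv_le_of_lipschitz hf).trans (le_abs_self _))

theorem LipschitzWith.integral_deriv_eq_sub (hf : LipschitzWith K f) (a b : ℝ) :
    ∫ t in a..b, deriv f t = f b - f a := by
  have hint : LipschitzWith K (fun x => ∫ t in a..x, deriv f t) := by
    refine LipschitzWith.of_dist_le_mul fun x y => ?_
    rw [dist_eq_norm, intervalIntegral.integral_interval_sub_left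
      (hf.intervalIntegrable_deriv a x) (hf.intervalIntegrable_deriv a y), Real.dist_eq]
    exact intervalIntegral.norm_integral_le_of_norm_le_const (f := deriv f) fun _ _ =>
      norm_deriv_le_of_lipschitz hf
  -- `f` minus the integral of its derivative is absolutely continuous with a.e. zero derivative
  obtain ⟨C, hC⟩ := (hf.sub hint).lipschitzOnWith.absolutelyContinuousOnInterval
    |>.const_of_ae_hasDerivAt_zero (a := a) (b := b) <| by
      filter_upwards [hf.ae_differentiableAt_real,
        (hf.intervalIntegrable_deriv a b).ae_hasDerivAt_integral] with x hfx hintx hx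
      exact (sub_self (deriv f x)) ▸ hfx.hasDerivAt.sub (hintx hx a left_mem_uIcc)
  have ha := hC a left_mem_uIcc
  have hb := hC b right_mem_uIcc
  simp only [intervalIntegral.integral_same, sub_zero] at ha hb
  rw [← ha, sub_eq_iff_eq_add] at hb
  rw [hb]; abel

end LipschitzFTC

theorem lipschitzWith_of_lipschitzOnWith_Iic_Ici {β : Type*} [PseudoMetricSpace β] {K : NNReal}
    {f : ℝ → β} {c : ℝ} (h₁ : LipschitzOnWith K f (Iic c)) (h₂ : LipschitzOnWith K f (Ici c)) :
    LipschitzWith K f := by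
  have across : ∀ s t, s ≤ c → c ≤ t → dist (f s) (f t) ≤ K * dist s t := fun s t hs ht =>
    calc dist (f s) (f t) ≤ dist (f s) (f c) + dist (f c) (f t) := dist_triangle _ _ _
      _ ≤ K * dist s c + K * dist c t :=
        add_le_add (h₁.dist_le_mul s hs c self_mem_Iic) (h₂.dist_le_mul c self_mem_Ici t ht)
      _ = K * dist s t := by
        rw [Real.dist_eq, Real.dist_eq, Real.dist_eq, abs_of_nonpos (by linarith),
          abs_of_nonpos (by linarith), abs_of_nonpos (by linarith)]
        ring
  refine LipschitzWith.of_dist_le_mul fun s t => ?_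
  rcases le_total s c with hs | hs <;> rcases le_total t c with ht | ht
  · exact h₁.dist_le_mul s hs t ht
  · exact across s t hs ht
  · rw [dist_comm, dist_comm s]
    exact across t s ht hs
  · exact h₂.dist_le_mul s hs t ht

namespace DIncl

section Solutions

variable {E : Type*} [NormedAddCommGroup E] [NormedSpace ℝ E]
  {F : E → Set E} {S U : Set E} {x y : ℝ → E} {I J : Set ℝ}

theorem IsSolOn.mono_set (h : IsSolOn F U x I) (hUS : U ⊆ S) : IsSolOn F S x I :=
  ⟨fun t ht => hUS (h.1 t ht), h.2⟩

theorem IsSolOn.mono (h : IsSolOn F S x I) (hJI : J ⊆ I) : IsSolOn F S x J := by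
  obtain ⟨hx, v, hint, hv, hrep⟩ := h
  exact ⟨fun t ht => hx t (hJI ht), v, fun a ha b hb => hint a (hJI ha) b (hJI hb),
    hv.mono fun t ht htJ => ht (hJI htJ), fun a ha b hb => hrep a (hJI ha) b (hJI hb)⟩

theorem IsSolOn.congr (h : IsSolOn F S x I) (hxy : EqOn x y I) : IsSolOn F S y I := by
  obtain ⟨hx, v, hint, hv, hrep⟩ := h
  refine ⟨fun t ht => hxy ht ▸ hx t ht, v, hint, hv.mono fun t ht htI => ?_, fun a ha b hb => ?_⟩
  · exact hxy htI ▸ ht htI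
  · rw [← hxy ha, ← hxy hb]
    exact hrep a ha b hb

theorem IsSolOn.comp_add_right (h : IsSolOn F S x I) (c : ℝ) :
    IsSolOn F S (fun s => x (s + c)) ((· + c) ⁻¹' I) := by
  obtain ⟨hx, v, hint, hv, hrep⟩ := h
  refine ⟨fun t ht => hx _ ht, fun s => v (s + c), fun a ha b hb => ?_,
    (measurePreserving_add_right volume c).quasiMeasurePreserving.ae hv, fun a ha b hb => ?_⟩
  · simpa using (hint (a + c) ha (b + c) hb).comp_add_right c
  · simpa [intervalIntegral.integral_comp_add_right v c] using hrep (a + c) ha (b + c) hb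

theorem IsSolOn.union {c : ℝ} (h₁ : IsSolOn F S x I) (h₂ : IsSolOn F S x J) (hI : I ⊆ Iic c)
    (hJ : J ⊆ Ici c) (hcI : c ∈ I) (hcJ : c ∈ J) : IsSolOn F S x (I ∪ J) := by
  obtain ⟨hx₁, v₁, hint₁, hv₁, hrep₁⟩ := h₁
  obtain ⟨hx₂, v₂, hint₂, hv₂, hrep₂⟩ := h₂
  set v : ℝ → E := fun t => if t ≤ c then v₁ t else v₂ t
  have to_c : ∀ s ∈ I ∪ J, IntervalIntegrable v volume s c ∧ x c = x s + ∫ r in s..c, v r := by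
    rintro s (hs | hs)
    · have hv : EqOn v₁ v (uIoc s c) := fun r hr =>
        (if_pos ((uIoc_of_le (hI hs)).subst (motive := (r ∈ ·)) hr).2).symm
      exact ⟨(hint₁ s hs c hcI).congr hv, (intervalIntegral.integral_congr_ae
        (ae_of_all _ fun r hr => hv hr)).symm ▸ hrep₁ s hs c hcI⟩
    · have hv : EqOn v₂ v (uIoc s c) := fun r hr =>
        (if_neg (not_le.2 ((uIoc_of_ge (hJ hs)).subst (motive := (r ∈ ·)) hr).1)).symm
      exact ⟨(hint₂ s hs c hcJ).congr hv, (intervalIntegral.integral_congr_ae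
        (ae_of_all _ fun r hr => hv hr)).symm ▸ hrep₂ s hs c hcJ⟩
  refine ⟨fun t ht => ht.elim (hx₁ t) (hx₂ t), v,
    fun s hs t ht => (to_c s hs).1.trans (to_c t ht).1.symm, ?_, fun s hs t ht => ?_⟩
  · filter_upwards [hv₁, hv₂] with t h₁ h₂ ht
    by_cases htc : t ≤ c
    · have htI : t ∈ I := ht.elim id fun htJ => le_antisymm htc (hJ htJ) ▸ hcI
      simpa [v, htc] using h₁ htI
    · have htJ : t ∈ J := ht.resolve_left fun htI => htc (hI htI)
      simpa [v, htc] using h₂ htJ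
  · rw [← intervalIntegral.integral_add_adjacent_intervals (to_c s hs).1 (to_c t ht).1.symm,
      intervalIntegral.integral_symm t c, ← add_assoc, ← (to_c s hs).2, (to_c t ht).2]
    abel

theorem IsSolOn.lipschitzOnWith {M : NNReal} (h : IsSolOn F S x I) (hI : I.OrdConnected)
    (hM : ∀ y ∈ S, ∀ w ∈ F y, ‖w‖ ≤ M) : LipschitzOnWith M x I := by
  obtain ⟨hx, v, -, hv, hrep⟩ := h
  refine LipschitzOnWith.of_dist_le_mul fun s hs t ht => ?_
  rw [dist_eq_norm, hrep t ht s hs, add_sub_cancel_left, Real.dist_eq]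
  refine intervalIntegral.norm_integral_le_of_norm_le_const_ae ?_
  filter_upwards [hv] with r hr hrts
  have hrI : r ∈ I := hI.uIcc_subset ht hs (uIoc_subset_uIcc hrts)
  exact hM _ (hx r hrI) _ (hr hrI)

theorem IsSolOn.slope_mem_closure_convexHull [CompleteSpace E] {t t' : ℝ}
    (h : IsSolOn F S x (Icc t t')) (htt' : t < t') {c : E} {δ : ℝ}
    (hx : ∀ r ∈ Icc t t', x r ∈ Metric.closedBall c δ) :
    slope x t t' ∈ closure (convexHull ℝ (⋃ y ∈ S ∩ Metric.closedBall c δ, F y)) := by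
  obtain ⟨hxS, v, hint, hv, hrep⟩ := h
  have hmem : ∀ᵐ r ∂volume.restrict (Ioc t t'),
      v r ∈ closure (convexHull ℝ (⋃ y ∈ S ∩ Metric.closedBall c δ, F y)) := by
    rw [ae_restrict_iff' measurableSet_Ioc]
    filter_upwards [hv] with r hr hrI
    have hrI' : r ∈ Icc t t' := Ioc_subset_Icc_self hrI
    exact subset_closure (subset_convexHull ℝ _
      (mem_biUnion (x := x r) ⟨hxS r hrI', hx r hrI'⟩ (hr hrI')))
  have hint' := hint t (left_mem_Icc.2 htt'.le) t' (right_mem_Icc.2 htt'.le)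
  convert (convex_convexHull ℝ _).closure.set_average_mem isClosed_closure
    (by simp [htt']) measure_Ioc_lt_top.ne hmem hint'.1 using 1
  rw [setAverage_eq, Real.volume_real_Ioc_of_le htt'.le, ← intervalIntegral.integral_of_le htt'.le,
    slope_def_module, hrep t (left_mem_Icc.2 htt'.le) t' (right_mem_Icc.2 htt'.le),
    add_sub_cancel_left]

end Solutions

theorem USCOn.exists_subset_thickening {α β : Type*} [PseudoMetricSpace α] [PseudoMetricSpace β]
    {F : α → Set β} {D : Set α} {x : α} (h : USCOn F D) (hx : x ∈ D) {ε : ℝ}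
    (hε : 0 < ε) : ∃ δ > 0, ∀ y ∈ D, dist y x < δ → F y ⊆ Metric.thickening ε (F x) :=
  (h x hx ε hε).imp fun _ ⟨hδ, hF⟩ =>
    ⟨hδ, fun y hy hyx _ hz => Metric.mem_thickening_iff.2 (hF y hy hyx hz)⟩

section Filippov

variable {E : Type*} [NormedAddCommGroup E] [NormedSpace ℝ E]
  {F : E → Set E} {X S : Set E} {x : E}

theorem FilippovOn.mono (h : FilippovOn F X) (hSX : S ⊆ X) : FilippovOn F S :=
  ⟨fun x hx ε hε => (h.1 x (hSX hx) ε hε).imp fun _ ⟨hδ, hF⟩ => ⟨hδ, fun y hy => hF y (hSX hy)⟩,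
    fun x hx => h.2 x (hSX hx)⟩

/-- Upper semicontinuity makes `F` locally bounded, hence bounded on a compact set. -/
theorem FilippovOn.exists_norm_le (hF : FilippovOn F S) (hS : IsCompact S) :
    ∃ M : NNReal, ∀ y ∈ S, ∀ w ∈ F y, ‖w‖ ≤ M := by
  have hbdd : Bornology.IsBounded (⋃ y ∈ S, F y) := by
    refine hS.induction_on (p := fun s => Bornology.IsBounded (⋃ y ∈ s, F y)) (by simp)
      (fun s t hst ht => ht.subset (biUnion_subset_biUnion_left hst))
      (fun s t hs ht => by simpa only [biUnion_union] using hs.union ht) fun x hx => ?_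
    obtain ⟨δ, hδ, hsub⟩ := hF.1.exists_subset_thickening hx one_pos
    refine ⟨S ∩ Metric.ball x δ, inter_mem_nhdsWithin S (Metric.ball_mem_nhds x hδ), ?_⟩
    exact (hF.2 x hx).1.isBounded.thickening.subset
      (iUnion₂_subset fun y hy => hsub y hy.1 hy.2)
  obtain ⟨C, hC⟩ := isBounded_iff_forall_norm_le.1 hbdd
  exact ⟨C.toNNReal, fun y hy w hw =>
    (hC w (mem_biUnion hy hw)).trans (Real.le_coe_toNNReal C)⟩

theorem FilippovOn.mem_of_forall_mem_closure_convexHull (hF : FilippovOn F S) (hx : x ∈ S)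
    {z : E} (hz : ∀ δ > 0, z ∈ closure (convexHull ℝ (⋃ y ∈ S ∩ Metric.closedBall x δ, F y))) :
    z ∈ F x := by
  obtain ⟨hcomp, hconv, -⟩ := hF.2 x hx
  rw [← hcomp.isClosed.closure_eq, Metric.closure_eq_iInter_cthickening]
  refine mem_iInter₂.2 fun ε hε => ?_
  obtain ⟨δ, hδ, hsub⟩ := hF.1.exists_subset_thickening hx hε
  refine Metric.closure_thickening_subset_cthickening ε _ <|
    closure_mono (convexHull_min ?_ (hconv.thickening ε)) (hz (δ / 2) (half_pos hδ))
  exact iUnion₂_subset fun y hy =>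
    hsub y hy.1 ((Metric.mem_closedBall.1 hy.2).trans_lt (half_lt_self hδ))

end Filippov

section Limits

variable {E : Type*} [NormedAddCommGroup E] [NormedSpace ℝ E]
  {F : E → Set E} {S : Set E} {M : NNReal} {ψ : ℕ → ℝ → E} {φ : ℝ → E}

theorem isSolOn_univ_of_lipschitzWith [FiniteDimensional ℝ E] (hlip : LipschitzWith M φ)
    (hS : ∀ t, φ t ∈ S) (hd : ∀ t, DifferentiableAt ℝ φ t → deriv φ t ∈ F (φ t)) :
    IsSolOn F S φ univ :=
  ⟨fun t _ => hS t, deriv φ, fun a _ b _ => hlip.intervalIntegrable_deriv a b,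
    hlip.ae_differentiableAt_real.mono fun t ht _ => hd t ht,
    fun a _ b _ => by rw [hlip.integral_deriv_eq_sub]; abel⟩

theorem slope_mem_closure_convexHull_of_mapClusterPt [CompleteSpace E]
    (hφ : MapClusterPt φ atTop ψ) (hlip : ∀ k, LipschitzWith M (ψ k)) {t t' δ : ℝ}
    (htt' : t < t') (hδ : M * (t' - t) < δ / 2)
    (hsol : ∀ᶠ k in atTop, IsSolOn F S (ψ k) (Icc t t')) :
    slope φ t t' ∈ closure (convexHull ℝ (⋃ y ∈ S ∩ Metric.closedBall (φ t) δ, F y)) := by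
  set C := closure (convexHull ℝ (⋃ y ∈ S ∩ Metric.closedBall (φ t) δ, F y))
  -- `D` is closed in the product topology and contains `ψ k` for large `k`, hence contains `φ`
  set D : Set (ℝ → E) := {f | δ / 2 ≤ dist (f t) (φ t)} ∪ (fun f => slope f t t') ⁻¹' C
  have hD : IsClosed D := by
    refine (isClosed_le continuous_const ((continuous_apply t).dist continuous_const)).union
      (isClosed_closure.preimage ?_)
    simp only [slope_def_module]
    fun_prop
  have hψD : ∀ᶠ k in atTop, ψ k ∈ D := by
    filter_upwards [hsol] with k hk
    refine or_iff_not_imp_left.2 fun hfar : ¬δ / 2 ≤ dist (ψ k t) (φ t) =>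
      hk.slope_mem_closure_convexHull htt' fun r hr => ?_
    have hstep : dist (ψ k r) (ψ k t) ≤ M * (t' - t) :=
      calc dist (ψ k r) (ψ k t) ≤ M * dist r t := (hlip k).dist_le_mul r t
        _ ≤ M * (t' - t) := by
          gcongr
          rw [Real.dist_eq, abs_of_nonneg] <;> linarith [hr.1, hr.2]
    rw [Metric.mem_closedBall]
    calc dist (ψ k r) (φ t) ≤ dist (ψ k r) (ψ k t) + dist (ψ k t) (φ t) := dist_triangle _ _ _
      _ ≤ δ := by linarith [not_le.1 hfar]
  have hφD : φ ∈ D := hD.closure_subset (hφ.clusterPt.mem_closure_of_mem _ hψD)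
  refine hφD.resolve_left fun hfar => ?_
  simp only [mem_ofPred_eq, dist_self] at hfar
  linarith [mul_nonneg M.coe_nonneg (sub_nonneg.2 htt'.le)]

theorem FilippovOn.deriv_mem_of_mapClusterPt [CompleteSpace E] (hF : FilippovOn F S)
    (hφ : MapClusterPt φ atTop ψ) (hlip : ∀ k, LipschitzWith M (ψ k)) {t : ℝ} (hφt : φ t ∈ S)
    (hsol : ∀ t', ∀ᶠ k in atTop, IsSolOn F S (ψ k) (Icc t t')) (hd : DifferentiableAt ℝ φ t) :
    deriv φ t ∈ F (φ t) := by
  refine hF.mem_of_forall_mem_closure_convexHull hφt fun δ hδ => ?_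
  have hslope : Tendsto (slope φ t) (𝓝[>] t) (𝓝 (deriv φ t)) :=
    (hasDerivAt_iff_tendsto_slope.1 hd.hasDerivAt).mono_left
      (nhdsWithin_mono t fun _ hr => ne_of_gt hr)
  have hsmall : ∀ᶠ t' in 𝓝[>] t, (M : ℝ) * (t' - t) < δ / 2 :=
    (tendsto_nhdsWithin_of_tendsto_nhds (Continuous.tendsto' (by fun_prop) t 0 (by simp))
      ).eventually_lt_const (half_pos hδ)
  refine isClosed_closure.mem_of_tendsto hslope ?_
  filter_upwards [self_mem_nhdsWithin, hsmall] with t' htt' ht'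
  exact slope_mem_closure_convexHull_of_mapClusterPt hφ hlip htt' ht' (hsol t')

theorem FilippovOn.exists_isSolOn_univ_mapClusterPt [FiniteDimensional ℝ E] (hF : FilippovOn F S)
    (hS : IsCompact S) (hlip : ∀ k, LipschitzWith M (ψ k)) (hψS : ∀ k t, ψ k t ∈ S)
    (hsol : ∀ s, ∀ᶠ k in atTop, IsSolOn F S (ψ k) (Ici s)) :
    ∃ φ, IsSolOn F S φ univ ∧ MapClusterPt φ atTop ψ := by
  -- Tychonoff: the `M`-Lipschitz paths in `S` form a compact set in the product topology
  have hL : IsCompact ({f : ℝ → E | LipschitzWith M f} ∩ univ.pi fun _ => S) :=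
    (isCompact_univ_pi fun _ => hS).inter_left (isClosed_setOfPred_lipschitzWith M)
  obtain ⟨φ, ⟨hφlip, hφS⟩, hφ⟩ := hL.exists_mapClusterPt (f := atTop) (u := ψ)
    (tendsto_principal.2 (Eventually.of_forall fun k => ⟨hlip k, fun t _ => hψS k t⟩))
  refine ⟨φ, isSolOn_univ_of_lipschitzWith hφlip (fun t => hφS t trivial) fun t hd => ?_, hφ⟩
  exact hF.deriv_mem_of_mapClusterPt hφ hlip (hφS t trivial)
    (fun _ => (hsol t).mono fun _ hk => hk.mono Icc_subset_Ici_self) hd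

end Limits

section Omega

variable {E : Type*} [NormedAddCommGroup E] [NormedSpace ℝ E]
  {F : E → Set E} {S U V : Set E}

theorem maxInv_mono (h : U ⊆ V) : maxInv F U ⊆ maxInv F V :=
  fun _ ⟨ψ, hψ, hψ0⟩ => ⟨ψ, hψ.mono_set h, hψ0⟩

theorem maxInv_subset_omegaS (hUS : U ⊆ S) : maxInv F U ⊆ omegaS F S U := by
  rintro _ ⟨ψ, hψ, rfl⟩
  refine mem_iInter₂.2 fun t _ => subset_closure <|
    mem_iUnion₂.2 ⟨t, self_mem_Ici, mem_iUnion₂.2 ⟨ψ (-t), hψ.1 _ trivial, ?_⟩⟩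
  exact ⟨fun s => ψ (s + -t), ((hψ.mono_set hUS).comp_add_right (-t)).mono fun _ _ => trivial,
    by simp, by simp⟩

theorem IsSolOn.mem_mflowSet {z : ℝ → E} (hz : IsSolOn F S z (Ici 0)) (hz0 : z 0 ∈ U)
    {m T : ℝ} (hm : m ≤ T) : z T ∈ mflowSet F S (Ici m) U :=
  mem_iUnion₂.2 ⟨T, hm, mem_iUnion₂.2 ⟨z 0, hz0, z, hz.mono Icc_subset_Ici_self, rfl, rfl⟩⟩

theorem mem_omegaS_of_mapClusterPt {ι : Type*} {l : Filter ι} {u : ι → E} {p : E}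
    (hp : MapClusterPt p l u) (hu : ∀ m, ∀ᶠ i in l, u i ∈ mflowSet F S (Ici m) U) :
    p ∈ omegaS F S U :=
  mem_iInter₂.2 fun m _ => hp.clusterPt.mem_closure_of_mem _ (hu m)

theorem exists_isSolOn_of_mem_omegaS {y : E} (hy : y ∈ omegaS F S U) {m ε : ℝ} (hm : 0 ≤ m)
    (hε : 0 < ε) :
    ∃ T ≥ m, ∃ x : ℝ → E, IsSolOn F S x (Icc 0 T) ∧ x 0 ∈ U ∧ dist (x T) y < ε := by
  obtain ⟨_, hb, hdist⟩ := Metric.mem_closure_iff.1 (mem_iInter₂.1 hy m hm) ε hε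
  obtain ⟨T, hT, a, ha, x, hx, rfl, rfl⟩ := by simpa only [mflowSet, mem_iUnion] using hb
  exact ⟨T, hT, x, hx, ha, by rwa [dist_comm]⟩

theorem IsSolOn.exists_extension_Ici (hSinv : IsInvSet F S) {x : ℝ → E} {T : ℝ} (hT : 0 ≤ T)
    (hx : IsSolOn F S x (Icc 0 T)) :
    ∃ z : ℝ → E, IsSolOn F S z (Ici 0) ∧ (∀ t ≤ 0, z t = x 0) ∧ z T = x T := by
  obtain ⟨φ, hφ, hφ0⟩ := hSinv (hx.1 T ⟨hT, le_rfl⟩)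
  set z : ℝ → E := fun t => if t ≤ T then x (max t 0) else φ (t - T)
  refine ⟨z, ?_, fun t ht => by simp [z, ht.trans hT, max_eq_right ht], by simp [z, max_eq_left hT]⟩
  rw [← Icc_union_Ici_eq_Ici hT]
  refine IsSolOn.union (hx.congr fun t ht => ?_)
    (((hφ.comp_add_right (-T)).mono fun _ _ => trivial).congr fun t ht => ?_)
    Icc_subset_Iic_self subset_rfl (right_mem_Icc.2 hT) self_mem_Ici
  · simp [z, ht.2, max_eq_left ht.1]
  · rcases eq_or_lt_of_le (mem_Ici.1 ht) with rfl | hlt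
    · simp [z, hφ0, max_eq_left hT]
    · simp [z, not_le.2 hlt, sub_eq_add_neg]

theorem IsSolOn.lipschitzWith_of_constant_on_Iic {M : NNReal} {z : ℝ → E}
    (hz : IsSolOn F S z (Ici 0)) (hconst : ∀ t ≤ 0, z t = z 0)
    (hM : ∀ y ∈ S, ∀ w ∈ F y, ‖w‖ ≤ M) : LipschitzWith M z :=
  lipschitzWith_of_lipschitzOnWith_Iic_Ici (c := 0)
    (LipschitzOnWith.of_dist_le_mul fun s hs t ht => by
      rw [hconst s hs, hconst t ht, dist_self]
      positivity)
    (hz.lipschitzOnWith ordConnected_Ici hM)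

theorem omegaS_subset_maxInv_omegaS [FiniteDimensional ℝ E] (hF : FilippovOn F S)
    (hS : IsCompact S) (hSinv : IsInvSet F S) : omegaS F S U ⊆ maxInv F (omegaS F S U) := by
  intro y hy
  obtain ⟨M, hM⟩ := hF.exists_norm_le hS
  choose T hT x hx hx0 hxT using fun k : ℕ =>
    exists_isSolOn_of_mem_omegaS hy k.cast_nonneg (Nat.one_div_pos_of_nat (n := k))
  have hT0 : ∀ k, 0 ≤ T k := fun k => k.cast_nonneg.trans (hT k)
  choose z hz hz0 hzT using fun k => (hx k).exists_extension_Ici hSinv (hT0 k)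
  have hzS : ∀ k t, z k t ∈ S := fun k t => (le_total t 0).elim
    (fun ht => hz0 k t ht ▸ (hx k).1 0 (left_mem_Icc.2 (hT0 k))) ((hz k).1 t)
  have hlate : ∀ s, ∀ᶠ k in atTop, -s ≤ T k := fun s =>
    (tendsto_natCast_atTop_atTop.eventually_ge_atTop (-s)).mono fun k hk => hk.trans (hT k)
  set ψ : ℕ → ℝ → E := fun k s => z k (s + T k)
  have hψlip : ∀ k, LipschitzWith M (ψ k) := fun k => by
    simpa [ψ, Function.comp_def] using ((hz k).lipschitzWith_of_constant_on_Iic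
      (fun t ht => (hz0 k t ht).trans (hz0 k 0 le_rfl).symm) hM).comp
      (isometry_add_right (T k)).lipschitz
  obtain ⟨φ, hφ, hφψ⟩ := hF.exists_isSolOn_univ_mapClusterPt hS hψlip (fun k s => hzS k _)
    fun s => (hlate s).mono fun k hk =>
      ((hz k).comp_add_right (T k)).mono fun r (hr : s ≤ r) => by simp; linarith
  have hψ0 : Tendsto (fun k => ψ k 0) atTop (𝓝 y) := by
    refine tendsto_iff_dist_tendsto_zero.2 (squeeze_zero (fun _ => dist_nonneg) (fun k => ?_)
      tendsto_one_div_add_atTop_nhds_zero_nat)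
    simpa [ψ, hzT] using (hxT k).le
  have hφ0 : φ 0 = y :=
    eq_of_nhds_neBot ((hφψ.tendsto_comp ((continuous_apply 0).tendsto φ)).clusterPt.mono hψ0)
  have hφω : ∀ t, φ t ∈ omegaS F S U := fun t =>
    mem_omegaS_of_mapClusterPt (hφψ.tendsto_comp ((continuous_apply t).tendsto φ)) fun m =>
      (hlate (t - m)).mono fun k hk =>
        (hz k).mem_mflowSet ((hz0 k 0 le_rfl).symm ▸ hx0 k) (by linarith)
  exact ⟨φ, ⟨fun t _ => hφω t, hφ.2⟩, hφ0⟩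

end Omega

end DIncl

theorem maxInv_eq_omegaS_general {n : ℕ} (X : Set (Fin n → ℝ))
    (F : (Fin n → ℝ) → Set (Fin n → ℝ)) (hF : FilippovOn F X)
    (S : Set (Fin n → ℝ)) (hSX : S ⊆ X) (hS : IsCompact S) (hSinv : IsInvSet F S)
    (U : Set (Fin n → ℝ)) (hUS : U ⊆ S) (hω : omegaS F S U ⊆ U) :
    maxInv F U = omegaS F S U :=
  (maxInv_subset_omegaS hUS).antisymm
    ((omegaS_subset_maxInv_omegaS (hF.mono hSX) hS hSinv).trans (maxInv_mono hω))

/-- If `ω_S(U) ⊆ U` then `Inv(U) = ω_S(U)`. -/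
theorem maxInv_eq_omegaS {n : ℕ} (X : Set (Fin n → ℝ)) (hX : IsCompact X)
    (F : (Fin n → ℝ) → Set (Fin n → ℝ)) (hF : FilippovOn F X)
    (S : Set (Fin n → ℝ)) (hSX : S ⊆ X) (hS : IsCompact S) (hSinv : IsInvSet F S)
    (U : Set (Fin n → ℝ)) (hUS : U ⊆ S) (hω : omegaS F S U ⊆ U) :
    maxInv F U = omegaS F S U :=
  maxInv_eq_omegaS_general X F hF S hSX hS hSinv U hUS hω
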